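/- arXiv:2302.06113 — 6 statements merged into one kernel-verified Lean document; each statement's English description precedes it below -/
import Mathlib

section
/- Let h > 0 and ε > 0 be real numbers, x₀ ∈ ℝ, x₁ = x₀ + h, and u₀, u₁ ∈ ℝ. Define λ₀ = ((1+ε²h²)/(ε²h²))·(u₀ − u₁/√(1+ε²h²)), λ₁ = ((1+ε²h²)/(ε²h²))·(u₁ − u₀/√(1+ε²h²)), and the IMQ interpolant r(x) = λ₀/√(1+ε²(x−x₀)²) + λ₁/√(1+ε²(x−x₁)²). Then the derivative of r at x₀ satisfies r′(x₀) = (u₁·√(1+ε²h²) − u₀)/((1+ε²h²)·h). -/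
/-!
Each IMQ basis function is stationary at its own center, so `λ₀` drops out of `r'(x₀)`, which
is `λ₁ ε² h / (1 + ε²h²)^(3/2)`; substituting `λ₁` gives the claim.
-/

open Real

theorem hasDerivAt_div_sqrt_one_add_sq (l ε c x : ℝ) :
    HasDerivAt (fun y => l / √(1 + ε^2*(y - c)^2))
      (-(l * ε^2 * (x - c)) / (√(1 + ε^2*(x - c)^2) * (1 + ε^2*(x - c)^2))) x := by
  have hq : 0 < 1 + ε^2*(x - c)^2 := by positivity
  have hinner : HasDerivAt (fun y => 1 + ε^2*(y - c)^2) (ε^2 * (2 * (x - c))) x := by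
    simpa using ((((hasDerivAt_id x).sub_const c).pow 2).const_mul (ε^2)).const_add 1
  refine ((hasDerivAt_const x l).div (hinner.sqrt hq.ne') (sqrt_pos.2 hq).ne').congr_deriv ?_
  rw [sq_sqrt hq.le]
  field_simp
  ring

theorem imq_two_point_deriv_general
    (h ε x₀ u₀ u₁ : ℝ) (hh : 0 < h) (hε : 0 < ε)
    (x₁ : ℝ) (hx₁ : x₁ = x₀ + h)
    (l₀ l₁ : ℝ)
    (hl₁ : l₁ = ((1 + ε^2*h^2)/(ε^2*h^2)) * (u₁ - u₀ / Real.sqrt (1 + ε^2*h^2)))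
    (r : ℝ → ℝ)
    (hr : r = fun x => l₀ / Real.sqrt (1 + ε^2*(x - x₀)^2)
      + l₁ / Real.sqrt (1 + ε^2*(x - x₁)^2)) :
    deriv r x₀ = (u₁ * Real.sqrt (1 + ε^2*h^2) - u₀) / ((1 + ε^2*h^2) * h) := by
  have hS : 0 < 1 + ε^2*h^2 := by positivity
  have hr_deriv : HasDerivAt r (l₁ * ε^2 * h / (√(1 + ε^2*h^2) * (1 + ε^2*h^2))) x₀ := by
    subst hr hx₁
    refine ((hasDerivAt_div_sqrt_one_add_sq l₀ ε x₀ x₀).add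
      (hasDerivAt_div_sqrt_one_add_sq l₁ ε (x₀ + h) x₀)).congr_deriv ?_
    simp only [sub_self, sub_add_cancel_left, neg_sq]
    ring
  rw [hr_deriv.deriv, hl₁]
  field_simp
  linear_combination (u₀ - u₁ * √(1 + ε^2*h^2)) * sq_sqrt hS.le

/-- Derivative of the two-node IMQ interpolant at the left node. -/
theorem imq_two_point_deriv
    (h ε x₀ u₀ u₁ : ℝ) (hh : 0 < h) (hε : 0 < ε)
    (x₁ : ℝ) (hx₁ : x₁ = x₀ + h)
    (l₀ l₁ : ℝ)
    (hl₀ : l₀ = ((1 + ε^2*h^2)/(ε^2*h^2)) * (u₀ - u₁ / Real.sqrt (1 + ε^2*h^2)))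
    (hl₁ : l₁ = ((1 + ε^2*h^2)/(ε^2*h^2)) * (u₁ - u₀ / Real.sqrt (1 + ε^2*h^2)))
    (r : ℝ → ℝ)
    (hr : r = fun x => l₀ / Real.sqrt (1 + ε^2*(x - x₀)^2)
      + l₁ / Real.sqrt (1 + ε^2*(x - x₁)^2)) :
    deriv r x₀ = (u₁ * Real.sqrt (1 + ε^2*h^2) - u₀) / ((1 + ε^2*h^2) * h) :=
  imq_two_point_deriv_general h ε x₀ u₀ u₁ hh hε x₁ hx₁ l₀ l₁ hl₁ r hr
end

section
/- Let h > 0 and ε > 0 be real numbers, x₀ ∈ ℝ, x₁ = x₀ + h, and u₀, u₁ ∈ ℝ. Define λ₀ = ((1+ε²h²)/(ε²h²(2+ε²h²)))·((1+ε²h²)u₀ − u₁), λ₁ = ((1+ε²h²)/(ε²h²(2+ε²h²)))·((1+ε²h²)u₁ − u₀), and the IQ interpolant r(x) = λ₀/(1+ε²(x−x₀)²) + λ₁/(1+ε²(x−x₁)²). Then the derivative of r at x₀ satisfies r′(x₀) = 2·(u₁(1+ε²h²) − u₀)/((1+ε²h²)(2+ε²h²)·h). -/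
theorem hasDerivAt_div_one_add_sq_mul_sq (c ε a x : ℝ) :
    HasDerivAt (fun y => c / (1 + ε^2*(y - a)^2))
      (-(2*c*ε^2*(x - a)) / (1 + ε^2*(x - a)^2)^2) x := by
  have hden : HasDerivAt (fun y => 1 + ε^2*(y - a)^2) (ε^2*(2*(x - a))) x := by
    simpa using (((hasDerivAt_id x).sub_const a).fun_pow 2).const_mul (ε^2) |>.const_add 1
  exact ((hasDerivAt_const x c).fun_div hden (by positivity)).congr_deriv (by ring)

theorem iq_two_point_deriv_general
    (h ε x₀ u₀ u₁ : ℝ) (hh : 0 < h) (hε : 0 < ε)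
    (x₁ : ℝ) (hx₁ : x₁ = x₀ + h)
    (l₀ l₁ : ℝ)
    (hl₁ : l₁ = ((1 + ε^2*h^2)/(ε^2*h^2*(2 + ε^2*h^2))) * ((1 + ε^2*h^2)*u₁ - u₀))
    (r : ℝ → ℝ)
    (hr : r = fun x => l₀ / (1 + ε^2*(x - x₀)^2) + l₁ / (1 + ε^2*(x - x₁)^2)) :
    deriv r x₀ = 2*(u₁*(1 + ε^2*h^2) - u₀) / ((1 + ε^2*h^2)*(2 + ε^2*h^2)*h) := by
  subst hr hx₁
  -- `φ₀` is stationary at its own centre, so only the `l₁` term contributes at `x₀`.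
  refine ((hasDerivAt_div_one_add_sq_mul_sq l₀ ε x₀ x₀).add
    (hasDerivAt_div_one_add_sq_mul_sq l₁ ε (x₀ + h) x₀)).deriv.trans ?_
  subst hl₁
  have hεh : ε^2*h^2 ≠ 0 := by positivity
  field_simp
  ring

/-- Derivative of the two-node IQ interpolant at the left node. -/
theorem iq_two_point_deriv
    (h ε x₀ u₀ u₁ : ℝ) (hh : 0 < h) (hε : 0 < ε)
    (x₁ : ℝ) (hx₁ : x₁ = x₀ + h)
    (l₀ l₁ : ℝ)
    (hl₀ : l₀ = ((1 + ε^2*h^2)/(ε^2*h^2*(2 + ε^2*h^2))) * ((1 + ε^2*h^2)*u₀ - u₁))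
    (hl₁ : l₁ = ((1 + ε^2*h^2)/(ε^2*h^2*(2 + ε^2*h^2))) * ((1 + ε^2*h^2)*u₁ - u₀))
    (r : ℝ → ℝ)
    (hr : r = fun x => l₀ / (1 + ε^2*(x - x₀)^2) + l₁ / (1 + ε^2*(x - x₁)^2)) :
    deriv r x₀ = 2*(u₁*(1 + ε^2*h^2) - u₀) / ((1 + ε^2*h^2)*(2 + ε^2*h^2)*h) :=
  iq_two_point_deriv_general h ε x₀ u₀ u₁ hh hε x₁ hx₁ l₀ l₁ hl₁ r hr
end

section
/- Let h > 0, x₀ ∈ ℝ, x₁ = x₀ + h, and u₀, u₁ ∈ ℝ. For each ε > 0 let r_ε be the IQ interpolant r_ε(x) = λ₀(ε)/(1+ε²(x−x₀)²) + λ₁(ε)/(1+ε²(x−x₁)²) with λ₀(ε) = ((1+ε²h²)/(ε²h²(2+ε²h²)))·((1+ε²h²)u₀ − u₁) and λ₁(ε) = ((1+ε²h²)/(ε²h²(2+ε²h²)))·((1+ε²h²)u₁ − u₀). Then the derivative r_ε′(x₀) tends to the forward difference (u₁ − u₀)/h as ε → 0⁺. -/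
open Filter Topology

/-!
Only the basis function centred at `x₁` contributes to `r_ε'(x₀)`, since each IQ basis function
has a critical point at its own centre. Its contribution simplifies to
`2((1 + ε²h²)u₁ − u₀) / (h(2 + ε²h²)(1 + ε²h²))`, a function continuous at `ε = 0` whose value
there is the forward difference; the `1/ε²` blow-up of the weights is cancelled exactly by the
`ε²` in the derivative of the basis function.
-/

theorem hasDerivAt_div_one_add_sq_mul_sub_sq (A c ε x : ℝ) :
    HasDerivAt (fun x => A / (1 + ε^2*(x - c)^2))
      (2 * A * ε^2 * (c - x) / (1 + ε^2*(x - c)^2)^2) x := by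
  have hden : HasDerivAt (fun x => 1 + ε^2*(x - c)^2) (ε^2 * (2 * (x - c))) x := by
    simpa using (((hasDerivAt_id x).sub_const c).pow 2).const_mul (ε^2) |>.const_add 1
  exact ((hasDerivAt_const x A).div hden (by positivity)).congr_deriv (by ring)

/-- The interpolant `r_ε` with nodes `x₀`, `x₀ + h`. -/
noncomputable def iqTwoPointInterpolant (h x₀ u₀ u₁ ε x : ℝ) : ℝ :=
  (((1 + ε^2*h^2)/(ε^2*h^2*(2 + ε^2*h^2))) * ((1 + ε^2*h^2)*u₀ - u₁))
    / (1 + ε^2*(x - x₀)^2)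
  + (((1 + ε^2*h^2)/(ε^2*h^2*(2 + ε^2*h^2))) * ((1 + ε^2*h^2)*u₁ - u₀))
    / (1 + ε^2*(x - (x₀ + h))^2)

theorem deriv_iqTwoPointInterpolant {h ε : ℝ} (hh : h ≠ 0) (hε : ε ≠ 0) (x₀ u₀ u₁ : ℝ) :
    deriv (iqTwoPointInterpolant h x₀ u₀ u₁ ε) x₀
      = 2 * ((1 + ε^2*h^2)*u₁ - u₀) / (h * (2 + ε^2*h^2) * (1 + ε^2*h^2)) := by
  have hr := (hasDerivAt_div_one_add_sq_mul_sub_sq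
      (((1 + ε^2*h^2)/(ε^2*h^2*(2 + ε^2*h^2))) * ((1 + ε^2*h^2)*u₀ - u₁)) x₀ ε x₀).add
    (hasDerivAt_div_one_add_sq_mul_sub_sq
      (((1 + ε^2*h^2)/(ε^2*h^2*(2 + ε^2*h^2))) * ((1 + ε^2*h^2)*u₁ - u₀)) (x₀ + h) ε x₀)
  refine hr.deriv.trans ?_
  have h₁ : 1 + ε^2*h^2 ≠ 0 := by positivity
  have h₂ : 2 + ε^2*h^2 ≠ 0 := by positivity
  field_simp
  ring

theorem tendsto_iqTwoPoint_deriv_formula {h : ℝ} (hh : h ≠ 0) (u₀ u₁ : ℝ) :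
    Tendsto (fun ε : ℝ => 2 * ((1 + ε^2*h^2)*u₁ - u₀) / (h * (2 + ε^2*h^2) * (1 + ε^2*h^2)))
      (𝓝 0) (𝓝 ((u₁ - u₀) / h)) := by
  have hcont : Continuous fun ε : ℝ =>
      2 * ((1 + ε^2*h^2)*u₁ - u₀) / (h * (2 + ε^2*h^2) * (1 + ε^2*h^2)) :=
    Continuous.div (by fun_prop) (by fun_prop) fun ε => by positivity
  exact hcont.tendsto' 0 _ (by field_simp; ring)

/-- As ε → 0⁺, the derivative of the two-node IQ interpolant at x₀
tends to the forward difference (u₁ − u₀)/h. -/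
theorem iq_two_point_deriv_tendsto_forward_difference
    (h x₀ u₀ u₁ : ℝ) (hh : 0 < h) (x₁ : ℝ) (hx₁ : x₁ = x₀ + h) :
    Filter.Tendsto
      (fun ε : ℝ =>
        deriv (fun x =>
          (((1 + ε^2*h^2)/(ε^2*h^2*(2 + ε^2*h^2))) * ((1 + ε^2*h^2)*u₀ - u₁))
            / (1 + ε^2*(x - x₀)^2)
          + (((1 + ε^2*h^2)/(ε^2*h^2*(2 + ε^2*h^2))) * ((1 + ε^2*h^2)*u₁ - u₀))
            / (1 + ε^2*(x - x₁)^2)) x₀)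
      (𝓝[>] 0) (𝓝 ((u₁ - u₀) / h)) := by
  subst hx₁
  change Tendsto (fun ε => deriv (iqTwoPointInterpolant h x₀ u₀ u₁ ε) x₀) _ _
  refine ((tendsto_iqTwoPoint_deriv_formula hh.ne' u₀ u₁).mono_left nhdsWithin_le_nhds).congr' ?_
  filter_upwards [self_mem_nhdsWithin] with ε hε
  exact (deriv_iqTwoPointInterpolant hh.ne' (ne_of_gt hε) x₀ u₀ u₁).symm
end

section
/- Fix ε > 0 and define, for h > 0, β₀(h) = (√(1+ε²h²)/(ε³h³))·(√(1+ε²h²)·arcsinh(2εh) − (1+√(1+ε²h²))·arcsinh(εh)). Then, as h → 0⁺, β₀(h) = −1/2 + (31/24)ε²h² + O(h⁴); that is, the function h ↦ β₀(h) − (−1/2 + (31/24)ε²h²) is O(h⁴) as h → 0⁺. -/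
open Filter Topology Asymptotics Real

/-!
Writing `u = εh`, the quantity `u³ (β₀ - (-1/2 + 31/24 u²))` is, after multiplying out with
`√(1+u²)² = 1 + u²`, an explicit combination of `arsinh u`, `arsinh (2u)` and `√(1+u²)`.
Substituting the Taylor polynomials `arsinh x ≈ x - x³/6 + 3x⁵/40` and
`√(1+u²) ≈ 1 + u²/2 - u⁴/8`, all terms up to order `u⁵` cancel, so this combination is
`O(u⁷)` and the remainder is `O(u⁴) = O(ε⁴h⁴)`. The Taylor remainder of `arsinh` comes from
the mean value inequality applied to its derivative `(1+x²)^(-1/2)`.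
-/

lemma abs_inv_sqrt_one_add_sq_sub_le {y : ℝ} (hy : y ^ 2 ≤ 1) :
    |(√(1 + y ^ 2))⁻¹ - (1 - y ^ 2 / 2 + 3 * y ^ 4 / 8)| ≤ y ^ 6 := by
  set w := √(1 + y ^ 2)
  have hw2 : w ^ 2 = 1 + y ^ 2 := sq_sqrt (by positivity)
  have hw1 : 1 ≤ w := by nlinarith [sqrt_nonneg (1 + y ^ 2)]
  have hd0 : 0 ≤ w - 1 := by linarith
  have hd : w - 1 ≤ y ^ 2 / 2 := by nlinarith
  have key : w⁻¹ - (1 - y ^ 2 / 2 + 3 * y ^ 4 / 8)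
      = -((w - 1) ^ 3 * (20 + 15 * (w - 1) + 3 * (w - 1) ^ 2)) / (8 * w) := by
    rw [show y ^ 4 = (y ^ 2) ^ 2 by ring, show y ^ 2 = w ^ 2 - 1 by linarith]
    field_simp
    ring
  have hc1 : (w - 1) ^ 3 ≤ (y ^ 2 / 2) ^ 3 := pow_le_pow_left₀ hd0 hd 3
  have hc2 : 20 + 15 * (w - 1) + 3 * (w - 1) ^ 2 ≤ 29 := by nlinarith
  have hN : 0 ≤ (w - 1) ^ 3 * (20 + 15 * (w - 1) + 3 * (w - 1) ^ 2) := by positivity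
  rw [key, neg_div, abs_neg, abs_of_nonneg (by positivity), div_le_iff₀ (by positivity)]
  nlinarith [mul_le_mul hc1 hc2 (by positivity) (by positivity), pow_two_nonneg (y ^ 3)]

lemma abs_arsinh_sub_le {x : ℝ} (h0 : 0 ≤ x) (h1 : x ≤ 1) :
    |arsinh x - (x - x ^ 3 / 6 + 3 * x ^ 5 / 40)| ≤ x ^ 7 := by
  set f : ℝ → ℝ := fun t => arsinh t - (t - t ^ 3 / 6 + 3 * t ^ 5 / 40)
  have hderiv : ∀ y ∈ Set.Icc 0 x,
      HasDerivWithinAt f ((√(1 + y ^ 2))⁻¹ - (1 - y ^ 2 / 2 + 3 * y ^ 4 / 8)) (Set.Icc 0 x) y := by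
    intro y _
    have hp : HasDerivAt (fun t : ℝ => t - t ^ 3 / 6 + 3 * t ^ 5 / 40)
        (1 - y ^ 2 / 2 + 3 * y ^ 4 / 8) y := by
      refine (((hasDerivAt_id y).sub ((hasDerivAt_pow 3 y).div_const 6)).add
        (((hasDerivAt_pow 5 y).const_mul 3).div_const 40)).congr_deriv ?_
      push_cast
      ring
    exact ((hasDerivAt_arsinh y).sub hp).hasDerivWithinAt
  have hbound : ∀ y ∈ Set.Icc 0 x,
      ‖(√(1 + y ^ 2))⁻¹ - (1 - y ^ 2 / 2 + 3 * y ^ 4 / 8)‖ ≤ x ^ 6 := fun y hy =>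
    (abs_inv_sqrt_one_add_sq_sub_le (by nlinarith [hy.1, hy.2])).trans
      (pow_le_pow_left₀ hy.1 hy.2 6)
  have hmvt := (convex_Icc 0 x).norm_image_sub_le_of_norm_hasDerivWithin_le hderiv hbound
    (Set.left_mem_Icc.2 h0) (Set.right_mem_Icc.2 h0)
  simpa [f, abs_of_nonneg h0, pow_succ] using hmvt

lemma abs_sqrt_one_add_sq_sub_le {y : ℝ} (hy : y ^ 2 ≤ 1) :
    |√(1 + y ^ 2) - (1 + y ^ 2 / 2 - y ^ 4 / 8)| ≤ y ^ 6 := by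
  set s := √(1 + y ^ 2)
  have hs2 : s ^ 2 = 1 + y ^ 2 := sq_sqrt (by positivity)
  have hs1 : 1 ≤ s := by nlinarith [sqrt_nonneg (1 + y ^ 2)]
  have hd0 : 0 ≤ s - 1 := by linarith
  have hd : s - 1 ≤ y ^ 2 / 2 := by nlinarith
  have key : s - (1 + y ^ 2 / 2 - y ^ 4 / 8) = (s - 1) ^ 3 * (s + 3) / 8 := by
    rw [show y ^ 4 = (y ^ 2) ^ 2 by ring, show y ^ 2 = s ^ 2 - 1 by linarith]
    ring
  have hc : (s - 1) ^ 3 * (s + 3) ≤ (y ^ 2 / 2) ^ 3 * (9 / 2) :=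
    mul_le_mul (pow_le_pow_left₀ hd0 hd 3) (by linarith) (by linarith) (by positivity)
  rw [key, abs_of_nonneg (by positivity)]
  nlinarith [pow_two_nonneg (y ^ 3)]

lemma arsinh_le_self {x : ℝ} (hx : 0 ≤ x) : arsinh x ≤ x :=
  (arsinh_le_arsinh.2 (self_le_sinh_iff.2 hx)).trans_eq (arsinh_sinh x)

/-- `β₀` as a function of `u = εh`. -/
noncomputable def imqBeta0 (u : ℝ) : ℝ :=
  √(1 + u ^ 2) / u ^ 3 * (√(1 + u ^ 2) * arsinh (2 * u) - (1 + √(1 + u ^ 2)) * arsinh u)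

lemma imqBeta0_sub_eq {u : ℝ} (hu : u ≠ 0) :
    imqBeta0 u - (-(1 / 2) + 31 / 24 * u ^ 2) =
      ((1 + u ^ 2) * arsinh (2 * u) - (√(1 + u ^ 2) + 1 + u ^ 2) * arsinh u
        + u ^ 3 / 2 - 31 / 24 * u ^ 5) / u ^ 3 := by
  have hs2 : √(1 + u ^ 2) ^ 2 = 1 + u ^ 2 := sq_sqrt (by positivity)
  rw [imqBeta0, eq_div_iff (pow_ne_zero 3 hu)]
  field_simp
  linear_combination 48 * (arsinh (u * 2) - arsinh u) * hs2

lemma abs_imqBeta0_numerator_le {u : ℝ} (hu0 : 0 ≤ u) (hu : u ≤ 1 / 2) :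
    |(1 + u ^ 2) * arsinh (2 * u) - (√(1 + u ^ 2) + 1 + u ^ 2) * arsinh u
        + u ^ 3 / 2 - 31 / 24 * u ^ 5| ≤ 200 * u ^ 7 := by
  have hu1 : u ≤ 1 := by linarith
  set s := √(1 + u ^ 2)
  set E₁ := arsinh u - (u - u ^ 3 / 6 + 3 * u ^ 5 / 40)
  set E₂ := arsinh (2 * u) - (2 * u - (2 * u) ^ 3 / 6 + 3 * (2 * u) ^ 5 / 40)
  set Ψ := s - (1 + u ^ 2 / 2 - u ^ 4 / 8)
  have hu2 : u ^ 2 ≤ 1 / 4 := by nlinarith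
  have hE₁ : |E₁| ≤ u ^ 7 := abs_arsinh_sub_le hu0 hu1
  have hE₂ : |E₂| ≤ 128 * u ^ 7 := by
    calc |E₂| ≤ (2 * u) ^ 7 := abs_arsinh_sub_le (by linarith) (by linarith)
      _ = 128 * u ^ 7 := by ring
  have hΨ : |Ψ| ≤ u ^ 6 := abs_sqrt_one_add_sq_sub_le (by linarith)
  -- all terms of order below `u⁷` cancel
  have hexp : (1 + u ^ 2) * arsinh (2 * u) - (s + 1 + u ^ 2) * arsinh u
      + u ^ 3 / 2 - 31 / 24 * u ^ 5 = 34 / 15 * u ^ 7 + 3 / 320 * u ^ 9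
        + (1 + u ^ 2) * E₂ - (2 + 3 / 2 * u ^ 2 - u ^ 4 / 8) * E₁ - Ψ * arsinh u := by
    ring
  have hA : |arsinh u| ≤ u := by
    rw [abs_of_nonneg (arsinh_nonneg_iff.2 hu0)]
    exact arsinh_le_self hu0
  have h₂ : |(1 + u ^ 2) * E₂| ≤ 160 * u ^ 7 := by
    rw [abs_mul, abs_of_pos (by positivity)]
    linarith [mul_le_mul (show 1 + u ^ 2 ≤ 5 / 4 by linarith) hE₂ (abs_nonneg _) (by norm_num)]
  have h₁ : |(2 + 3 / 2 * u ^ 2 - u ^ 4 / 8) * E₁| ≤ 3 * u ^ 7 := by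
    have hc : |2 + 3 / 2 * u ^ 2 - u ^ 4 / 8| ≤ 3 := by
      rw [abs_le]
      constructor <;> nlinarith [pow_nonneg hu0 4]
    rw [abs_mul]
    exact mul_le_mul hc hE₁ (abs_nonneg _) (by norm_num)
  have hΨA : |Ψ * arsinh u| ≤ u ^ 7 := by
    rw [abs_mul, pow_succ]
    exact mul_le_mul hΨ hA (abs_nonneg _) (by positivity)
  have h9 : u ^ 9 ≤ u ^ 7 := pow_le_pow_of_le_one hu0 hu1 (by norm_num)
  rw [hexp, abs_le]
  rw [abs_le] at h₁ h₂ hΨA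
  constructor <;> linarith [pow_nonneg hu0 7, pow_nonneg hu0 9]

lemma imqBeta0_sub_isBigO :
    (fun u => imqBeta0 u - (-(1 / 2) + 31 / 24 * u ^ 2)) =O[𝓝[>] 0] (fun u : ℝ => u ^ 4) := by
  refine isBigO_iff.2 ⟨200, ?_⟩
  filter_upwards [Ioo_mem_nhdsGT (show (0 : ℝ) < 1 / 2 by norm_num)] with u ⟨hu0, hu⟩
  rw [imqBeta0_sub_eq hu0.ne', norm_div, norm_pow, norm_of_nonneg hu0.le, norm_pow,
    norm_of_nonneg hu0.le, div_le_iff₀ (by positivity)]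
  calc _ ≤ 200 * u ^ 7 := abs_imqBeta0_numerator_le hu0.le hu.le
    _ = 200 * u ^ 4 * u ^ 3 := by ring

/-- Expansion of the IMQ-AB2 coefficient β₀ as h → 0⁺. -/
theorem imq_ab2_beta0_expansion (ε : ℝ) (hε : 0 < ε) :
    (fun h : ℝ =>
        (Real.sqrt (1 + ε^2*h^2) / (ε^3*h^3)) *
          (Real.sqrt (1 + ε^2*h^2) * Real.arsinh (2*ε*h)
            - (1 + Real.sqrt (1 + ε^2*h^2)) * Real.arsinh (ε*h))
        - (-(1/2) + (31/24)*ε^2*h^2))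
      =O[𝓝[>] 0] (fun h : ℝ => h^4) := by
  have hscale : Tendsto (ε * ·) (𝓝[>] 0) (𝓝[>] 0) :=
    tendsto_comap.mono_left (comap_mulLeft_nhdsGT_zero hε).ge
  have hcomp := imqBeta0_sub_isBigO.comp_tendsto hscale
  have hpow : (fun h : ℝ => (ε * h) ^ 4) =O[𝓝[>] 0] (fun h : ℝ => h ^ 4) := by
    simpa only [mul_pow] using (isBigO_refl (fun h : ℝ => h ^ 4) _).const_mul_left (ε ^ 4)
  refine (hcomp.trans hpow).congr_left fun h => ?_
  simp only [Function.comp_apply, imqBeta0, mul_pow, mul_assoc]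
end

section
/- Fix ε > 0 and define, for h > 0, β₁(h) = (√(1+ε²h²)/(ε³h³))·((1+√(1+ε²h²))·arcsinh(εh) − arcsinh(2εh)). Then, as h → 0⁺, β₁(h) = 3/2 − (41/24)ε²h² + O(h⁴); that is, the function h ↦ β₁(h) − (3/2 − (41/24)ε²h²) is O(h⁴) as h → 0⁺. -/
/-!
Put `x = εh` and `s = √(1 + x²)`, so that `β₁ = s ((1 + s) arsinh x - arsinh 2x) / x³`.
Replace `s` by `1 + x²/2 - x⁴/8` (error `O(x⁶)`, by squaring) and `arsinh` by
`x - x³/6 + 3x⁵/40` (error `O(x⁷)`: by the mean value theorem, since the derivative of the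
error, `(√(1 + x²))⁻¹ - (1 - x²/2 + 3x⁴/8)`, is `O(x⁶)`). The numerator becomes the polynomial
`3x³/2 - 41x⁵/24 + O(x⁷)`, and dividing by `x³` gives the expansion.
-/

open Filter Topology Asymptotics Real Set

theorem isBigO_sub_pow_succ_of_hasDerivAt {E : Type*} [NormedAddCommGroup E] [NormedSpace ℝ E]
    {f f' : ℝ → E} {x₀ : ℝ} {n : ℕ}
    (hff' : ∀ᶠ x in 𝓝 x₀, HasDerivAt f (f' x) x) (hf' : f' =O[𝓝 x₀] fun x ↦ (x - x₀) ^ n) :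
    (fun x ↦ f x - f x₀) =O[𝓝 x₀] fun x ↦ (x - x₀) ^ (n + 1) := by
  obtain ⟨c, hc0, hc⟩ := hf'.exists_nonneg
  have hseg : ∀ᶠ x in 𝓝 x₀, ∀ y ∈ segment ℝ x₀ x,
      HasDerivAt f (f' y) y ∧ ‖f' y‖ ≤ c * ‖(y - x₀) ^ n‖ := by
    rw [← nhdsWithin_univ] at hff' ⊢
    exact convex_univ.eventually_nhdsWithin_segment (mem_univ x₀)
      (hff'.and (nhdsWithin_univ x₀ ▸ hc.bound))
  refine IsBigO.of_bound c ?_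
  filter_upwards [hseg] with x hx
  have hmvt := (convex_segment x₀ x).norm_image_sub_le_of_norm_hasDerivWithin_le
    (C := c * ‖x - x₀‖ ^ n) (fun y hy ↦ (hx y hy).1.hasDerivWithinAt)
    (fun y hy ↦ (hx y hy).2.trans (by rw [norm_pow]; gcongr; exact norm_sub_le_of_mem_segment hy))
    (left_mem_segment ℝ x₀ x) (right_mem_segment ℝ x₀ x)
  simpa [pow_succ, mul_assoc] using hmvt

theorem isBigO_pow_mul {l : Filter ℝ} {f g : ℝ → ℝ} {m n : ℕ}
    (hf : f =O[l] (· ^ m)) (hg : g =O[l] (· ^ n)) :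
    (fun x ↦ f x * g x) =O[l] (· ^ (m + n)) := by
  simpa only [pow_add] using hf.mul hg

theorem sqrt_one_add_sub_taylor_mem_Icc {u : ℝ} (hu : 0 ≤ u) :
    √(1 + u) - (1 + u/2 - u^2/8) ∈ Icc 0 (u^3/16) := by
  constructor
  · rcases le_total (1 + u/2 - u^2/8) 0 with hneg | hpos
    · linarith [sqrt_nonneg (1 + u)]
    · have hu8 : u ≤ 8 := by nlinarith
      have : 1 + u/2 - u^2/8 ≤ √(1 + u) := by
        rw [le_sqrt hpos (by linarith)]
        nlinarith [pow_nonneg hu 3]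
      linarith
  · have hpos : 0 ≤ 1 + u/2 - u^2/8 + u^3/16 := by nlinarith [sq_nonneg (u - 2)]
    have : √(1 + u) ≤ 1 + u/2 - u^2/8 + u^3/16 := by
      rw [sqrt_le_left hpos]
      nlinarith [pow_nonneg hu 4, sq_nonneg (u - 2)]
    linarith

theorem abs_inv_sqrt_one_add_sub_taylor_le {u : ℝ} (hu : 0 ≤ u) :
    |(√(1 + u))⁻¹ - (1 - u/2 + 3*u^2/8)| ≤ 3/8 * u^3 := by
  obtain ⟨hlo, hhi⟩ := sqrt_one_add_sub_taylor_mem_Icc hu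
  have hsq : √(1 + u)^2 = 1 + u := sq_sqrt (by linarith)
  -- `s⁻¹ = s / (1 + u)` since `s² = 1 + u`
  have key : (√(1 + u))⁻¹ - (1 - u/2 + 3*u^2/8)
      = (√(1 + u) - (1 + u/2 - u^2/8) - 3/8 * u^3) / (1 + u) := by
    field_simp
    nlinarith [hsq]
  rw [key, abs_div, abs_of_pos (by linarith : (0:ℝ) < 1 + u), div_le_iff₀ (by linarith)]
  rw [abs_le]
  constructor <;> nlinarith [pow_nonneg hu 3, pow_nonneg hu 4]

theorem sqrt_one_add_sq_sub_taylor_isBigO :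
    (fun x : ℝ ↦ √(1 + x^2) - (1 + x^2/2 - x^4/8)) =O[𝓝 0] (· ^ 6) := by
  refine IsBigO.of_bound (1/16) (Eventually.of_forall fun x ↦ ?_)
  obtain ⟨hlo, hhi⟩ := sqrt_one_add_sub_taylor_mem_Icc (sq_nonneg x)
  simp only [← pow_mul] at hlo hhi
  rw [Real.norm_eq_abs, Real.norm_eq_abs, abs_of_nonneg hlo, abs_of_nonneg (by positivity)]
  linarith

theorem arsinh_sub_taylor_isBigO :
    (fun x ↦ arsinh x - (x - x^3/6 + 3*x^5/40)) =O[𝓝 0] (· ^ 7) := by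
  have hderiv : ∀ x : ℝ, HasDerivAt (fun x ↦ arsinh x - (x - x^3/6 + 3*x^5/40))
      ((√(1 + x^2))⁻¹ - (1 - x^2/2 + 3*x^4/8)) x := fun x ↦ by
    refine ((hasDerivAt_arsinh x).fun_sub (((hasDerivAt_id' x).fun_sub
      ((hasDerivAt_pow 3 x).div_const 6)).fun_add
      (((hasDerivAt_pow 5 x).const_mul 3).div_const 40))).congr_deriv ?_
    push_cast; ring
  have hbound : (fun x : ℝ ↦ (√(1 + x^2))⁻¹ - (1 - x^2/2 + 3*x^4/8))
      =O[𝓝 0] fun x ↦ (x - 0) ^ 6 := by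
    refine IsBigO.of_bound (3/8) (Eventually.of_forall fun x ↦ ?_)
    simpa [Real.norm_eq_abs, ← pow_mul, Even.pow_abs ⟨3, rfl⟩ x]
      using abs_inv_sqrt_one_add_sub_taylor_le (sq_nonneg x)
  simpa using isBigO_sub_pow_succ_of_hasDerivAt (Eventually.of_forall hderiv) hbound

theorem imq_numerator_sub_taylor_isBigO :
    (fun x : ℝ ↦ √(1 + x^2) * ((1 + √(1 + x^2)) * arsinh x - arsinh (2*x))
      - (3/2*x^3 - 41/24*x^5)) =O[𝓝 0] (· ^ 7) := by
  set s : ℝ → ℝ := fun x ↦ √(1 + x^2)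
  set p : ℝ → ℝ := fun x ↦ 1 + x^2/2 - x^4/8
  set q : ℝ → ℝ := fun x ↦ x - x^3/6 + 3*x^5/40
  have hbdd {f : ℝ → ℝ} (hf : Continuous f) : f =O[𝓝 0] (· ^ 0) := by
    simpa using (hf.tendsto 0).isBigO_one ℝ
  have hdouble {k : ℕ} {f : ℝ → ℝ} (hf : f =O[𝓝 0] (· ^ k)) :
      (fun x ↦ f (2 * x)) =O[𝓝 0] (· ^ k) := by
    refine (hf.comp_tendsto ?_).trans (IsBigO.of_bound (2 ^ k) (by simp [mul_pow]))
    simpa using (continuous_const_mul (2:ℝ)).tendsto 0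
  have hs : (fun x ↦ s x - p x) =O[𝓝 0] (· ^ 6) := sqrt_one_add_sq_sub_taylor_isBigO
  have hA : (fun x ↦ arsinh x - q x) =O[𝓝 0] (· ^ 7) := arsinh_sub_taylor_isBigO
  have hA1 : arsinh =O[𝓝 0] (· ^ 1) := by simpa using (hasDerivAt_arsinh 0).isBigO_sub
  have hT : (fun x ↦ (1 + s x) * arsinh x - arsinh (2*x)) =O[𝓝 0] (· ^ 1) :=
    (isBigO_pow_mul (hbdd (by fun_prop)) hA1).sub (hdouble hA1)
  have hR : (fun x ↦ p x * ((1 + p x) * q x - q (2*x)) - (3/2*x^3 - 41/24*x^5))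
      =O[𝓝 0] (· ^ 7) := by
    refine (isBigO_pow_mul (isBigO_refl _ _) (hbdd (f := fun x ↦
      -(163/120) + (157/480)*x^2 - (23/1920)*x^4 + (3/2560)*x^6) (by fun_prop))).congr_left
      fun x ↦ ?_
    simp only [p, q]; ring
  have hTdiff : (fun x ↦ (s x - p x) * arsinh x + (1 + p x) * (arsinh x - q x)
      - (arsinh (2*x) - q (2*x))) =O[𝓝 0] (· ^ 7) :=
    ((isBigO_pow_mul hs hA1).add (isBigO_pow_mul (m := 0) (hbdd (by fun_prop)) hA)).sub
      (hdouble hA)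
  have hsum := hR.add ((isBigO_pow_mul hs hT).add (isBigO_pow_mul (m := 0)
    (hbdd (by fun_prop : Continuous p)) hTdiff))
  refine hsum.congr_left fun x ↦ ?_
  simp only [s, p, q]; ring

theorem imq_beta1_sub_isBigO :
    (fun x : ℝ ↦ √(1 + x^2) / x^3 * ((1 + √(1 + x^2)) * arsinh x - arsinh (2*x))
      - (3/2 - 41/24*x^2)) =O[𝓝[≠] 0] (· ^ 4) := by
  have hne : ∀ᶠ x in 𝓝[≠] (0:ℝ), x ≠ 0 := self_mem_nhdsWithin
  refine ((imq_numerator_sub_taylor_isBigO.mono nhdsWithin_le_nhds).mul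
    (isBigO_refl (fun x : ℝ ↦ (x^3)⁻¹) _)).congr' ?_ ?_
  all_goals filter_upwards [hne] with x hx; field_simp

/-- Expansion of the IMQ-AB2 coefficient β₁ as h → 0⁺. -/
theorem imq_ab2_beta1_expansion (ε : ℝ) (hε : 0 < ε) :
    (fun h : ℝ =>
        (Real.sqrt (1 + ε^2*h^2) / (ε^3*h^3)) *
          ((1 + Real.sqrt (1 + ε^2*h^2)) * Real.arsinh (ε*h)
            - Real.arsinh (2*ε*h))
        - (3/2 - (41/24)*ε^2*h^2))
      =O[𝓝[>] 0] (fun h : ℝ => h^4) := by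
  have hscale : Tendsto (fun h ↦ ε * h) (𝓝[>] 0) (𝓝[≠] 0) := by
    refine tendsto_nhdsWithin_iff.2 ⟨?_, ?_⟩
    · exact ((continuous_const_mul ε).tendsto' 0 0 (mul_zero ε)).mono_left nhdsWithin_le_nhds
    · filter_upwards [self_mem_nhdsWithin] with h hh
      exact mul_ne_zero hε.ne' (ne_of_gt hh)
  refine ((imq_beta1_sub_isBigO.comp_tendsto hscale).congr_left fun h ↦ ?_).trans
    (IsBigO.of_bound (ε ^ 4) (by simp [mul_pow, abs_of_pos hε]))
  simp only [Function.comp, mul_pow]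
  ring_nf
end

section
/- Fix ε > 0 and define, for h > 0, β(h) = ((ε²h² − √(ε²h²+1) + 1)·arcsinh(εh))/(ε³h³). Then, as h → 0⁺, β(h) = 1/2 + ε²h²/24 + O(h⁴); that is, the function h ↦ β(h) − (1/2 + ε²h²/24) is O(h⁴) as h → 0⁺. -/
/-!
Put `x = εh` and `s = √(x² + 1)`. Since `(s - 1)(s + 1) = x²`, the numerator `x² - s + 1`
equals `s x² / (s + 1)`, so `β = s / (s + 1) · arsinh x / x`. The first factor is
`1/2 + x²/8 + O(x⁴)` by an exact identity, the second is `1 - x²/6 + O(x⁴)` by integrating the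
bounds `1 - y²/2 ≤ (1 + y²)^(-1/2) ≤ 1 - y²/2 + 3y⁴/8`, and the product of the two main parts
is `1/2 + x²/24 - x⁴/48`.
-/

open Filter Topology Asymptotics Real

theorem le_of_hasDerivAt_le {f g f' g' : ℝ → ℝ} {a x : ℝ}
    (hf : ∀ y, HasDerivAt f (f' y) y) (hg : ∀ y, HasDerivAt g (g' y) y)
    (hderiv : ∀ y, f' y ≤ g' y) (ha : f a ≤ g a) (hax : a ≤ x) : f x ≤ g x := by
  have hmono : Monotone (g - f) :=
    monotone_of_hasDerivAt_nonneg (fun y => (hg y).sub (hf y)) fun y => sub_nonneg.2 (hderiv y)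
  have := hmono hax
  simp only [Pi.sub_apply] at this
  linarith

theorem one_sub_sq_div_two_le_inv_sqrt_one_add_sq (x : ℝ) :
    1 - x ^ 2 / 2 ≤ (√(1 + x ^ 2))⁻¹ := by
  have hs : 0 < √(1 + x ^ 2) := sqrt_pos.2 (by positivity)
  have hsq : √(1 + x ^ 2) ^ 2 = 1 + x ^ 2 := sq_sqrt (by positivity)
  rw [← one_div, le_div_iff₀ hs]
  rcases le_or_gt (1 - x ^ 2 / 2) 0 with h | h
  · nlinarith [mul_nonpos_of_nonpos_of_nonneg h hs.le]
  · nlinarith [sq_nonneg ((1 - x ^ 2 / 2) * √(1 + x ^ 2) - 1), mul_pos h hs, sq_nonneg (x ^ 2)]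

theorem inv_sqrt_one_add_sq_le (x : ℝ) :
    (√(1 + x ^ 2))⁻¹ ≤ 1 - x ^ 2 / 2 + 3 * x ^ 4 / 8 := by
  have hs : 0 < √(1 + x ^ 2) := sqrt_pos.2 (by positivity)
  have hsq : √(1 + x ^ 2) ^ 2 = 1 + x ^ 2 := sq_sqrt (by positivity)
  have hp : 0 < 1 - x ^ 2 / 2 + 3 * x ^ 4 / 8 := by nlinarith [sq_nonneg (x ^ 2 - 4 / 3)]
  have key : 1 ≤ (1 - x ^ 2 / 2 + 3 * x ^ 4 / 8) ^ 2 * (1 + x ^ 2) := by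
    nlinarith [mul_nonneg (pow_nonneg (sq_nonneg x) 3) (sq_nonneg (x ^ 2 - 5 / 6)),
      pow_nonneg (sq_nonneg x) 3]
  rw [← one_div, div_le_iff₀ hs]
  nlinarith [mul_pos hp hs]

theorem sub_pow_three_div_six_le_arsinh {x : ℝ} (hx : 0 ≤ x) : x - x ^ 3 / 6 ≤ arsinh x := by
  refine le_of_hasDerivAt_le (f := fun y => y - y ^ 3 / 6) (f' := fun y => 1 - y ^ 2 / 2)
    (fun y => ?_) hasDerivAt_arsinh one_sub_sq_div_two_le_inv_sqrt_one_add_sq (by simp) hx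
  exact ((hasDerivAt_id' y).sub ((hasDerivAt_pow 3 y).div_const 6)).congr_deriv (by norm_num; ring)

theorem arsinh_le_sub_pow_three_div_six_add {x : ℝ} (hx : 0 ≤ x) :
    arsinh x ≤ x - x ^ 3 / 6 + 3 * x ^ 5 / 40 := by
  refine le_of_hasDerivAt_le (g := fun y => y - y ^ 3 / 6 + 3 * y ^ 5 / 40)
    (g' := fun y => 1 - y ^ 2 / 2 + 3 * y ^ 4 / 8) hasDerivAt_arsinh (fun y => ?_)
    inv_sqrt_one_add_sq_le (by simp) hx
  exact (((hasDerivAt_id' y).sub ((hasDerivAt_pow 3 y).div_const 6)).add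
    (((hasDerivAt_pow 5 y).const_mul 3).div_const 40)).congr_deriv (by norm_num; ring)

theorem abs_arsinh_div_self_sub_le {x : ℝ} (hx : 0 < x) :
    |arsinh x / x - (1 - x ^ 2 / 6)| ≤ 3 * x ^ 4 / 40 := by
  have hlo := sub_pow_three_div_six_le_arsinh hx.le
  have hhi := arsinh_le_sub_pow_three_div_six_add hx.le
  rw [abs_le, le_sub_iff_add_le, sub_le_iff_le_add, le_div_iff₀ hx, div_le_iff₀ hx]
  constructor <;> nlinarith

theorem abs_sqrt_div_sqrt_add_one_sub_le (x : ℝ) :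
    |√(x ^ 2 + 1) / (√(x ^ 2 + 1) + 1) - (1 / 2 + x ^ 2 / 8)| ≤ x ^ 4 / 16 := by
  set s := √(x ^ 2 + 1)
  have hs : s ^ 2 = x ^ 2 + 1 := sq_sqrt (by positivity)
  have hs1 : 1 ≤ s := one_le_sqrt.2 (by nlinarith)
  have hid : s / (s + 1) - (1 / 2 + x ^ 2 / 8) = -(x ^ 4 * (s + 3) / (8 * (s + 1) ^ 3)) := by
    rw [show x ^ 4 = (s ^ 2 - 1) ^ 2 by rw [hs]; ring, show x ^ 2 = s ^ 2 - 1 by linarith]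
    field_simp
    ring
  rw [hid, abs_neg, abs_of_nonneg (by positivity), div_le_div_iff₀ (by positivity) (by norm_num)]
  have : (s + 3) * 16 ≤ 8 * (s + 1) ^ 3 := by nlinarith
  nlinarith [mul_le_mul_of_nonneg_left this (pow_nonneg (sq_nonneg x) 2)]

theorem Asymptotics.IsBigO.mul_sub_mul {α R : Type*} [NormedCommRing R] {l : Filter α}
    {u v a b : α → R} {g : α → ℝ} (hu : (fun x => u x - a x) =O[l] g)
    (hv : (fun x => v x - b x) =O[l] g) (ha : a =O[l] (fun _ => (1 : ℝ)))
    (hv₁ : v =O[l] (fun _ => (1 : ℝ))) :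
    (fun x => u x * v x - a x * b x) =O[l] g := by
  have h₁ := hu.mul hv₁
  have h₂ := ha.mul hv
  simp only [mul_one, one_mul] at h₁ h₂
  exact (h₁.add h₂).congr_left fun x => by ring

/-- `β(h) = imqCoeff (ε * h)`. -/
noncomputable def imqCoeff (x : ℝ) : ℝ :=
  ((x ^ 2 - √(x ^ 2 + 1) + 1) * arsinh x) / x ^ 3

theorem imqCoeff_eq (x : ℝ) :
    imqCoeff x = √(x ^ 2 + 1) / (√(x ^ 2 + 1) + 1) * (arsinh x / x) := by
  rcases eq_or_ne x 0 with rfl | hx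
  · simp [imqCoeff]
  set s := √(x ^ 2 + 1)
  have hs : s ^ 2 = x ^ 2 + 1 := sq_sqrt (by positivity)
  have hs1 : 0 < s + 1 := by positivity
  have hnum : x ^ 2 - s + 1 = s * x ^ 2 / (s + 1) := by
    field_simp
    linear_combination -hs
  rw [imqCoeff, hnum]
  field_simp

theorem imqCoeff_sub_isBigO :
    (fun x => imqCoeff x - (1 / 2 + x ^ 2 / 24)) =O[𝓝[>] 0] (fun x => x ^ 4) := by
  have hp : (fun x => √(x ^ 2 + 1) / (√(x ^ 2 + 1) + 1) - (1 / 2 + x ^ 2 / 8))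
      =O[𝓝[>] 0] (fun x => x ^ 4) :=
    IsBigO.of_bound (1 / 16) <| Eventually.of_forall fun x => by
      rw [Real.norm_eq_abs, Real.norm_eq_abs, abs_of_nonneg (by positivity : (0 : ℝ) ≤ x ^ 4)]
      linarith [abs_sqrt_div_sqrt_add_one_sub_le x]
  have hq : (fun x => arsinh x / x - (1 - x ^ 2 / 6)) =O[𝓝[>] 0] (fun x => x ^ 4) :=
    IsBigO.of_bound (3 / 40) <| eventually_mem_nhdsWithin.mono fun x (hx : 0 < x) => by
      rw [Real.norm_eq_abs, Real.norm_eq_abs, abs_of_nonneg (by positivity : (0 : ℝ) ≤ x ^ 4)]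
      linarith [abs_arsinh_div_self_sub_le hx]
  have hp₁ : (fun x => √(x ^ 2 + 1) / (√(x ^ 2 + 1) + 1)) =O[𝓝[>] 0] (fun _ => (1 : ℝ)) :=
    IsBigO.of_bound 1 <| Eventually.of_forall fun x => by
      simp only [norm_one, mul_one, Real.norm_eq_abs]
      rw [abs_of_nonneg (by positivity)]
      exact div_le_one_of_le₀ (by linarith) (by positivity)
  have hQ₁ : (fun x : ℝ => 1 - x ^ 2 / 6) =O[𝓝[>] 0] (fun _ => (1 : ℝ)) :=
    ((Continuous.tendsto (by fun_prop) 0).mono_left nhdsWithin_le_nhds).isBigO_one ℝ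
  have hrem : (fun x : ℝ => (1 - x ^ 2 / 6) * (1 / 2 + x ^ 2 / 8) - (1 / 2 + x ^ 2 / 24))
      =O[𝓝[>] 0] (fun x => x ^ 4) :=
    ((isBigO_refl _ _).const_mul_left (-1 / 48)).congr_left fun x => by ring
  refine ((hq.mul_sub_mul hp hQ₁ hp₁).add hrem).congr_left fun x => ?_
  rw [imqCoeff_eq]
  ring

theorem tendsto_const_mul_nhdsGT_zero {ε : ℝ} (hε : 0 < ε) :
    Tendsto (fun h => ε * h) (𝓝[>] 0) (𝓝[>] 0) :=
  tendsto_nhdsWithin_iff.2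
    ⟨((continuous_const_mul ε).tendsto' 0 0 (mul_zero ε)).mono_left nhdsWithin_le_nhds,
      eventually_mem_nhdsWithin.mono fun _ hh => mul_pos hε hh⟩

/-- Expansion of the IMQ-AM coefficient β as h → 0⁺. -/
theorem imq_am_beta_expansion (ε : ℝ) (hε : 0 < ε) :
    (fun h : ℝ =>
        ((ε^2*h^2 - Real.sqrt (ε^2*h^2 + 1) + 1) * Real.arsinh (ε*h)) / (ε^3*h^3)
        - (1/2 + ε^2*h^2/24))
      =O[𝓝[>] 0] (fun h : ℝ => h^4) := by
  have hscaled := imqCoeff_sub_isBigO.comp_tendsto (tendsto_const_mul_nhdsGT_zero hε)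
  have hpow : (fun h : ℝ => (ε * h) ^ 4) =O[𝓝[>] 0] (fun h : ℝ => h ^ 4) := by
    simp only [mul_pow]
    exact (isBigO_refl _ _).const_mul_left _
  refine (hscaled.trans hpow).congr_left fun h => ?_
  simp only [Function.comp, imqCoeff, mul_pow]
end
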